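/- arXiv:2308.13119 — 2 statements merged into one kernel-verified Lean document; each statement's English description precedes it below -/
import Mathlib

section
/- If M ⊆ R^p is generated by h_1,...,h_r, then M_D is generated by the elements (h_j)_D together with (0, (z_i∘π_1 − z_i∘π_2)(h_j∘π_2)) for 1 ≤ i ≤ n and 1 ≤ j ≤ r. -/
/-! `double` is additive but not semilinear: `double (c • v) = φ1 c • double v - doubleDefect c v`,
where the defect `(0, (φ1 c - φ2 c) · φ2 v)` is the `S`-multiple `φ1 c - φ2 c` of `(0, φ2 v)`.
By hypothesis that multiplier lies in the ideal generated by the `φ1 (z i) - φ2 (z i)`, so every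
defect is an `S`-combination of the defects at the `z i`. Writing `m = ∑ c j • h j` expresses
`double m` through the `double (h j)` and these defects; conversely each defect at `z i`
is `φ1 (z i) • double (h j) - double (z i • h j)`. -/

/-- The double of `h ∈ R^p` along the two "pullback" homomorphisms `φ1, φ2 : R →+* S`. -/
def Lip.double {R S : Type*} [CommRing R] [CommRing S] {p : ℕ}
    (φ1 φ2 : R →+* S) (h : Fin p → R) : Fin p ⊕ Fin p → S :=
  Sum.elim (fun i => φ1 (h i)) (fun i => φ2 (h i))

open Submodule Set

theorem smul_mem_span_range_smul {S M ι : Type*} [CommSemiring S] [AddCommMonoid M]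
    [Module S M] {g : ι → S} {x : S} (hx : x ∈ Ideal.span (range g)) (w : M) :
    x • w ∈ span S (range fun i => g i • w) := by
  have hmap := mem_map_of_mem (f := LinearMap.toSpanSingleton S M w) hx
  rwa [Ideal.span, map_span, ← range_comp] at hmap

namespace Lip

variable {R S : Type*} [CommRing R] [CommRing S] {p : ℕ} (φ1 φ2 : R →+* S)

def doubleDefect (c : R) (v : Fin p → R) : Fin p ⊕ Fin p → S :=
  Sum.elim (fun _ => 0) (fun t => (φ1 c - φ2 c) * φ2 (v t))

theorem double_add (v w : Fin p → R) :
    double φ1 φ2 (v + w) = double φ1 φ2 v + double φ1 φ2 w := by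
  funext x
  cases x <;> simp [double]

theorem double_sum {ι : Type*} (s : Finset ι) (f : ι → Fin p → R) :
    double φ1 φ2 (∑ i ∈ s, f i) = ∑ i ∈ s, double φ1 φ2 (f i) :=
  map_sum (AddMonoidHom.mk' (double φ1 φ2) (double_add φ1 φ2)) f s

theorem double_smul (c : R) (v : Fin p → R) :
    double φ1 φ2 (c • v) = φ1 c • double φ1 φ2 v - doubleDefect φ1 φ2 c v := by
  funext x
  cases x <;> simp [double, doubleDefect, sub_mul]

theorem doubleDefect_eq_sub (c : R) (v : Fin p → R) :
    doubleDefect φ1 φ2 c v = φ1 c • double φ1 φ2 v - double φ1 φ2 (c • v) := by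
  rw [double_smul, sub_sub_cancel]

theorem doubleDefect_eq_smul (c : R) (v : Fin p → R) :
    doubleDefect φ1 φ2 c v = (φ1 c - φ2 c) • Sum.elim (0 : Fin p → S) (fun t => φ2 (v t)) := by
  funext x
  cases x <;> simp [doubleDefect]

theorem doubleDefect_mem_span {κ : Type*} {z : κ → R}
    (hz : ∀ α : R, φ1 α - φ2 α ∈ Ideal.span (range fun i => φ1 (z i) - φ2 (z i)))
    (c : R) (v : Fin p → R) :
    doubleDefect φ1 φ2 c v ∈ span S (range fun i => doubleDefect φ1 φ2 (z i) v) := by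
  simp only [doubleDefect_eq_smul]
  exact smul_mem_span_range_smul (hz c) _

theorem span_double_image_span_eq {κ ι : Type*} [Fintype ι] {z : κ → R}
    (hz : ∀ α : R, φ1 α - φ2 α ∈ Ideal.span (range fun i => φ1 (z i) - φ2 (z i)))
    (h : ι → Fin p → R) :
    span S (double φ1 φ2 '' span R (range h)) =
      span S (range (fun j => double φ1 φ2 (h j)) ∪
        range fun ij : κ × ι => doubleDefect φ1 φ2 (z ij.1) (h ij.2)) := by
  set K := span S (range (fun j => double φ1 φ2 (h j)) ∪
    range fun ij : κ × ι => doubleDefect φ1 φ2 (z ij.1) (h ij.2))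
  have hh_mem : ∀ j, h j ∈ span R (range h) := fun j => subset_span ⟨j, rfl⟩
  apply le_antisymm
  · have hdouble : ∀ j, double φ1 φ2 (h j) ∈ K := fun j => subset_span (.inl ⟨j, rfl⟩)
    have hdefect : ∀ c j, doubleDefect φ1 φ2 c (h j) ∈ K := fun c j =>
      span_mono (range_subset_iff.2 fun i => .inr ⟨(i, j), rfl⟩)
        (doubleDefect_mem_span φ1 φ2 hz c (h j))
    rw [span_le]
    rintro _ ⟨m, hm, rfl⟩
    obtain ⟨c, rfl⟩ := (mem_span_range_iff_exists_fun R).1 hm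
    rw [double_sum]
    refine sum_mem fun j _ => ?_
    rw [double_smul]
    exact sub_mem (smul_mem _ _ (hdouble j)) (hdefect (c j) j)
  · rw [span_le, union_subset_iff]
    constructor
    · rintro _ ⟨j, rfl⟩
      exact subset_span ⟨h j, hh_mem j, rfl⟩
    · rintro _ ⟨⟨i, j⟩, rfl⟩
      simp only [doubleDefect_eq_sub]
      exact sub_mem (smul_mem _ _ (subset_span ⟨h j, hh_mem j, rfl⟩))
        (subset_span ⟨z i • h j, smul_mem _ _ (hh_mem j), rfl⟩)

end Lip

/-- If `M ⊆ R^p` is generated by `h 1, ..., h r`, then the double `M_D` is generated by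
the `(h j)_D` together with the elements `(0, (z i ∘ π₁ − z i ∘ π₂)·(h j ∘ π₂))`,
i.e. `Sum.elim 0 (fun t => (φ1 (z i) − φ2 (z i)) * φ2 (h j t))`, assuming that
`φ1 α − φ2 α` always lies in the ideal generated by the `φ1 (z i) − φ2 (z i)`. -/
theorem doubleSpan_generators' {R S : Type*} [CommRing R] [CommRing S] {p r n : ℕ}
    (φ1 φ2 : R →+* S) (z : Fin n → R)
    (hz : ∀ α : R, φ1 α - φ2 α ∈ Ideal.span (Set.range fun i => φ1 (z i) - φ2 (z i)))
    (h : Fin r → (Fin p → R)) (M : Submodule R (Fin p → R))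
    (hM : M = Submodule.span R (Set.range h)) :
    Submodule.span S (Lip.double φ1 φ2 '' M)
      = Submodule.span S
          ((Set.range fun j => Lip.double φ1 φ2 (h j)) ∪
           (Set.range fun ij : Fin n × Fin r =>
             (Sum.elim (fun _ => (0 : S))
               (fun t => (φ1 (z ij.1) - φ2 (z ij.1)) * φ2 (h ij.2 t)) : Fin p ⊕ Fin p → S))) := by
  subst hM
  exact Lip.span_double_image_span_eq φ1 φ2 hz h
end

section
/- Under the hypotheses that there exists an ideal I of O_{X×X,(x,x)} with I·I_2((I_k(M))_D) ⊆ closure(I_{2k}(M_D)) and I_{2k}(h_D, M_D) ⊆ closure(I·I_2((I_k(h,M))_D)), if h ∈ M_{S_3} then h ∈ M_{S_1}. -/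
/-- Integral closure of a submodule `N ⊆ A^ι` by the curve criterion. -/
def Lip.curveCl {A : Type*} [CommRing A] {ι : Type*} (N : Submodule A (ι → A)) :
    Set (ι → A) :=
  {h | ∀ φ : A →+* PowerSeries ℂ,
    (fun i => φ (h i)) ∈
      Submodule.span (PowerSeries ℂ) ((fun m : ι → A => fun i => φ (m i)) '' (N : Set (ι → A)))}

/-- Integral closure of an ideal by the curve criterion. -/
def Lip.clIdeal {A : Type*} [CommRing A] (J : Ideal A) : Set A :=
  {a | ∀ φ : A →+* PowerSeries ℂ, φ a ∈ Ideal.map φ J}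

/-- The double of an element of `R`. -/
def Lip.idDouble {R S : Type*} [CommRing R] [CommRing S] (φ1 φ2 : R →+* S) (a : R) :
    Fin 2 → S := ![φ1 a, φ2 a]

/-- The double of an ideal `I ⊆ R`. -/
def Lip.idealDouble {R S : Type*} [CommRing R] [CommRing S] (φ1 φ2 : R →+* S)
    (I : Ideal R) : Submodule S (Fin 2 → S) :=
  Submodule.span S (Lip.idDouble φ1 φ2 '' (I : Set R))

/-- The Lipschitz saturation of an ideal `I ⊆ R`: `a ∈ I_S ↔ a_D ∈ closure (I_D)`. -/
def Lip.sat {R S : Type*} [CommRing R] [CommRing S] (φ1 φ2 : R →+* S) (I : Ideal R) :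
    Set R :=
  {a | Lip.idDouble φ1 φ2 a ∈ Lip.curveCl (Lip.idealDouble φ1 φ2 I)}

/-- The generator matrix `[M_D] = [[M], 0; [M]', Δ·[M]']` of the double `M_D`. -/
def Lip.doubleMatrix {R S : Type*} [CommRing R] [CommRing S] {p r n : ℕ}
    (φ1 φ2 : R →+* S) (z : Fin n → R) (g : Fin r → (Fin p → R)) :
    Matrix (Fin p ⊕ Fin p) (Fin r ⊕ Fin n × Fin r) S :=
  fun i c =>
    match i, c with
    | Sum.inl i, Sum.inl j => φ1 (g j i)
    | Sum.inr i, Sum.inl j => φ2 (g j i)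
    | Sum.inl _, Sum.inr _ => 0
    | Sum.inr i, Sum.inr (a, j) => (φ1 (z a) - φ2 (z a)) * φ2 (g j i)

/-- The ideal `I_{2k}(M_D)` of `2k×2k` minors of the generator matrix of `M_D`. -/
def Lip.I2kM {R S : Type*} [CommRing R] [CommRing S] {p r n : ℕ}
    (φ1 φ2 : R →+* S) (z : Fin n → R) (g : Fin r → (Fin p → R)) (k : ℕ) : Ideal S :=
  Ideal.span {d : S | ∃ (RI : Fin (2 * k) → Fin p ⊕ Fin p)
      (CJ : Fin (2 * k) → Fin r ⊕ Fin n × Fin r),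
    d = Matrix.det (Matrix.of fun a b : Fin (2 * k) =>
      Lip.doubleMatrix φ1 φ2 z g (RI a) (CJ b))}

/-- The ideal `I_{2k}(h_D, M_D)` of `2k×2k` minors of the generator matrix of the
module `(h_D, M_D)`, whose columns are `h_D` together with the columns of `[M_D]`. -/
def Lip.I2kHM {R S : Type*} [CommRing R] [CommRing S] {p r n : ℕ}
    (φ1 φ2 : R →+* S) (z : Fin n → R) (g : Fin r → (Fin p → R)) (h : Fin p → R)
    (k : ℕ) : Ideal S :=
  Ideal.span {d : S | ∃ (RI : Fin (2 * k) → Fin p ⊕ Fin p)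
      (CJ : Fin (2 * k) → Unit ⊕ (Fin r ⊕ Fin n × Fin r)),
    d = Matrix.det (Matrix.of fun a b : Fin (2 * k) =>
      Sum.elim (fun _ => Lip.double φ1 φ2 h (RI a))
        (fun c => Lip.doubleMatrix φ1 φ2 z g (RI a) c) (CJ b))}

/-- The generator matrix of the double `(I_k(N))_D` of the ideal of `k×k` minors of a
generator matrix with columns `g`. -/
def Lip.minorDoubleMatrix {R S : Type*} [CommRing R] [CommRing S] {p r n : ℕ}
    (φ1 φ2 : R →+* S) (z : Fin n → R) (g : Fin r → (Fin p → R)) (k : ℕ) :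
    Matrix (Fin 2) (((Fin k → Fin p) × (Fin k → Fin r)) ⊕
      (Fin n × ((Fin k → Fin p) × (Fin k → Fin r)))) S :=
  fun i c =>
    match i, c with
    | 0, Sum.inl (I, J) => φ1 (Matrix.det (Matrix.of fun a b : Fin k => g (J b) (I a)))
    | 1, Sum.inl (I, J) => φ2 (Matrix.det (Matrix.of fun a b : Fin k => g (J b) (I a)))
    | 0, Sum.inr _ => 0
    | 1, Sum.inr (i, (K, L)) =>
        (φ1 (z i) - φ2 (z i)) * φ2 (Matrix.det (Matrix.of fun a b : Fin k => g (L b) (K a)))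

/-- The ideal of `2×2` minors of a `2`-row matrix. -/
def Lip.I2 {S : Type*} [CommRing S] {ι : Type*} (E : Matrix (Fin 2) ι S) : Ideal S :=
  Ideal.span {d : S | ∃ c1 c2 : ι, d = E 0 c1 * E 1 c2 - E 0 c2 * E 1 c1}


namespace Lip

section ClosureOfIdeals

variable {S : Type*} [CommRing S]

theorem coe_subset_clIdeal_iff {J J' : Ideal S} :
    (J' : Set S) ⊆ clIdeal J ↔ ∀ ψ : S →+* PowerSeries ℂ, J'.map ψ ≤ J.map ψ := by
  simp only [Ideal.map_le_iff_le_comap]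
  exact ⟨fun h ψ _ ha => h ha ψ, fun h _ ha ψ => h ψ ha⟩

theorem clIdeal_subset_clIdeal {J J' : Ideal S} (h : (J' : Set S) ⊆ clIdeal J) :
    clIdeal J' ⊆ clIdeal J :=
  fun _ ha ψ => coe_subset_clIdeal_iff.mp h ψ (ha ψ)

theorem mul_subset_clIdeal_mul (I : Ideal S) {J J' : Ideal S}
    (h : (J' : Set S) ⊆ clIdeal J) : ((I * J' : Ideal S) : Set S) ⊆ clIdeal (I * J) :=
  coe_subset_clIdeal_iff.mpr fun ψ => by
    simpa only [Ideal.map_mul] using Ideal.mul_mono_right (coe_subset_clIdeal_iff.mp h ψ)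

end ClosureOfIdeals

section ColumnSpan

open scoped Matrix

variable {S A κ ι ι' : Type*} [CommRing S] [CommRing A]

def colSpan (E : Matrix κ ι S) : Submodule S (κ → S) :=
  Submodule.span S (Set.range Eᵀ)

def vecMap (ψ : S →+* A) : (κ → S) →ₛₗ[ψ] (κ → A) where
  toFun v i := ψ (v i)
  map_add' _ _ := funext fun _ => map_add ψ _ _
  map_smul' _ _ := funext fun _ => map_mul ψ _ _

theorem colSpan_le_comap_vecMap (ψ : S →+* A) (E : Matrix κ ι S) :
    colSpan E ≤ (colSpan (E.map ψ)).comap (vecMap ψ) :=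
  Submodule.span_le.mpr <| Set.range_subset_iff.mpr fun c => Submodule.subset_span ⟨c, rfl⟩

theorem span_image_map_le_colSpan_map (ψ : S →+* A) {E : Matrix κ ι S}
    {N : Submodule S (κ → S)} (hN : N ≤ colSpan E) :
    Submodule.span A (vecMap ψ '' N) ≤ colSpan (E.map ψ) :=
  Submodule.span_le.mpr <| by
    rintro _ ⟨v, hv, rfl⟩
    exact colSpan_le_comap_vecMap ψ E (hN hv)

theorem smul_single_mem_colSpan_map [DecidableEq κ] (ψ : S →+* A) {E : Matrix κ ι S}
    {j : κ} {w : S} (hw : ∀ c, w • Pi.single j (E j c) ∈ colSpan E) {x : κ → A}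
    (hx : x ∈ colSpan (E.map ψ)) : ψ w • Pi.single j (x j) ∈ colSpan (E.map ψ) := by
  let L : (κ → A) →ₗ[A] (κ → A) := ψ w • LinearMap.single A (fun _ => A) j ∘ₗ LinearMap.proj j
  suffices colSpan (E.map ψ) ≤ (colSpan (E.map ψ)).comap L from this hx
  refine Submodule.span_le.mpr ?_
  rintro _ ⟨c, rfl⟩
  have hc := colSpan_le_comap_vecMap ψ E (hw c)
  rw [Submodule.mem_comap] at hc
  rw [SetLike.mem_coe, Submodule.mem_comap]
  convert hc using 1
  ext i
  by_cases hij : i = j <;> simp [L, vecMap, Pi.single_apply, hij]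

theorem I2_le_of_forall_mem_colSpan {E : Matrix (Fin 2) ι S} {E' : Matrix (Fin 2) ι' S}
    (h : ∀ c, E'ᵀ c ∈ colSpan E) : I2 E' ≤ I2 E := by
  let det2 : (Fin 2 → S) →ₗ[S] (Fin 2 → S) →ₗ[S] S :=
    LinearMap.mk₂ S (fun v v' => v 0 * v' 1 - v' 0 * v 1)
      (fun _ _ _ => by simp only [Pi.add_apply]; ring)
      (fun _ _ _ => by simp only [Pi.smul_apply, smul_eq_mul]; ring)
      (fun _ _ _ => by simp only [Pi.add_apply]; ring)
      (fun _ _ _ => by simp only [Pi.smul_apply, smul_eq_mul]; ring)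
  have hdet2 : Submodule.map₂ det2 (colSpan E) (colSpan E) ≤ I2 E := by
    rw [colSpan, Submodule.map₂_span_span, Submodule.span_le]
    rintro _ ⟨_, ⟨c1, rfl⟩, _, ⟨c2, rfl⟩, rfl⟩
    exact Ideal.subset_span ⟨c1, c2, rfl⟩
  rw [I2, Ideal.span_le]
  rintro _ ⟨c1, c2, rfl⟩
  exact hdet2 (Submodule.apply_mem_map₂ det2 (h c1) (h c2))

theorem map_I2 (ψ : S →+* A) (E : Matrix (Fin 2) ι S) : (I2 E).map ψ = I2 (E.map ψ) := by
  rw [I2, I2, Ideal.map_span]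
  congr 1
  ext
  simp [eq_comm]

end ColumnSpan

section MinorDoubleMatrix

open scoped Matrix

variable {R S : Type*} [CommRing R] [CommRing S] {p r n k : ℕ}
  (φ1 φ2 : R →+* S) (z : Fin n → R) (g : Fin r → Fin p → R)

def minor (I : Fin k → Fin p) (J : Fin k → Fin r) : R :=
  Matrix.det (Matrix.of fun a b : Fin k => g (J b) (I a))

/-- The ideal `I_k(M)` of `k × k` minors of the matrix with columns `g`. -/
def minorIdeal (k : ℕ) : Ideal R :=
  Ideal.span {d | ∃ (I : Fin k → Fin p) (J : Fin k → Fin r), d = minor g I J}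

/-- The ideal of the diagonal of `X × X`, generated by the `z i ⊗ 1 - 1 ⊗ z i`. -/
def diagIdeal : Ideal S :=
  Ideal.span (Set.range fun i => φ1 (z i) - φ2 (z i))

theorem minorDoubleMatrix_transpose_inl (I : Fin k → Fin p) (J : Fin k → Fin r) :
    (minorDoubleMatrix φ1 φ2 z g k)ᵀ (Sum.inl (I, J)) = idDouble φ1 φ2 (minor g I J) := by
  ext i
  fin_cases i <;> rfl

theorem minorDoubleMatrix_transpose_inr (i : Fin n) (I : Fin k → Fin p) (J : Fin k → Fin r) :
    (minorDoubleMatrix φ1 φ2 z g k)ᵀ (Sum.inr (i, I, J)) =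
      (φ1 (z i) - φ2 (z i)) • Pi.single 1 (φ2 (minor g I J)) := by
  ext j
  fin_cases j <;> simp [minorDoubleMatrix, minor]

theorem minorDoubleMatrix_one_mem_map (c) :
    minorDoubleMatrix φ1 φ2 z g k 1 c ∈ (minorIdeal g k).map φ2 := by
  rcases c with ⟨I, J⟩ | ⟨i, I, J⟩
  · exact Ideal.mem_map_of_mem φ2 (Ideal.subset_span ⟨I, J, rfl⟩)
  · exact Ideal.mul_mem_left _ _ (Ideal.mem_map_of_mem φ2 (Ideal.subset_span ⟨I, J, rfl⟩))

theorem smul_single_mem_colSpan {w y : S} (hw : w ∈ diagIdeal φ1 φ2 z)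
    (hy : y ∈ (minorIdeal g k).map φ2) :
    w • Pi.single 1 y ∈ colSpan (minorDoubleMatrix φ1 φ2 z g k) := by
  let B : S →ₗ[S] S →ₗ[S] (Fin 2 → S) :=
    (LinearMap.lsmul S (Fin 2 → S)).compl₂ (LinearMap.single S (fun _ => S) 1)
  have hB : Submodule.map₂ B (diagIdeal φ1 φ2 z) ((minorIdeal g k).map φ2) ≤
      colSpan (minorDoubleMatrix φ1 φ2 z g k) := by
    rw [diagIdeal, minorIdeal, Ideal.map_span, Ideal.span, Ideal.span,
      Submodule.map₂_span_span, Submodule.span_le]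
    rintro _ ⟨_, ⟨i, rfl⟩, _, ⟨_, ⟨I, J, rfl⟩, rfl⟩, rfl⟩
    exact Submodule.subset_span ⟨Sum.inr (i, I, J), minorDoubleMatrix_transpose_inr ..⟩
  exact hB (Submodule.apply_mem_map₂ B hw hy)

theorem idDouble_mem_colSpan (hz : ∀ α, φ1 α - φ2 α ∈ diagIdeal φ1 φ2 z) {u : R}
    (hu : u ∈ minorIdeal g k) : idDouble φ1 φ2 u ∈ colSpan (minorDoubleMatrix φ1 φ2 z g k) := by
  induction hu using Submodule.span_induction with
  | mem _ hx =>
    obtain ⟨I, J, rfl⟩ := hx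
    exact Submodule.subset_span ⟨Sum.inl (I, J), minorDoubleMatrix_transpose_inl ..⟩
  | zero =>
    have h0 : idDouble φ1 φ2 0 = 0 := by ext i; fin_cases i <;> simp [idDouble]
    exact h0 ▸ zero_mem _
  | add x y _ _ hx hy =>
    have hadd : idDouble φ1 φ2 (x + y) = idDouble φ1 φ2 x + idDouble φ1 φ2 y := by
      ext i; fin_cases i <;> simp [idDouble]
    exact hadd ▸ add_mem hx hy
  | smul a x hx ihx =>
    -- `idDouble` is `φ1`-semilinear only up to a term in the diagonal ideal
    have hsmul : idDouble φ1 φ2 (a • x) =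
        φ1 a • idDouble φ1 φ2 x + (φ2 a - φ1 a) • Pi.single 1 (φ2 x) := by
      ext i; fin_cases i <;> simp [idDouble]; ring
    have hdiff : φ2 a - φ1 a ∈ diagIdeal φ1 φ2 z := by simpa using neg_mem (hz a)
    rw [hsmul]
    exact add_mem (Submodule.smul_mem _ _ ihx)
      (smul_single_mem_colSpan φ1 φ2 z g hdiff (Ideal.mem_map_of_mem φ2 hx))

theorem idealDouble_le_colSpan (hz : ∀ α, φ1 α - φ2 α ∈ diagIdeal φ1 φ2 z) :
    idealDouble φ1 φ2 (minorIdeal g k) ≤ colSpan (minorDoubleMatrix φ1 φ2 z g k) :=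
  Submodule.span_le.mpr <| by
    rintro _ ⟨u, hu, rfl⟩
    exact idDouble_mem_colSpan φ1 φ2 z g hz hu

theorem vecMap_idDouble_mem_colSpan_map (hz : ∀ α, φ1 α - φ2 α ∈ diagIdeal φ1 φ2 z) {a : R}
    (ha : a ∈ sat φ1 φ2 (minorIdeal g k)) (ψ : S →+* PowerSeries ℂ) :
    vecMap ψ (idDouble φ1 φ2 a) ∈ colSpan ((minorDoubleMatrix φ1 φ2 z g k).map ψ) :=
  span_image_map_le_colSpan_map ψ (idealDouble_le_colSpan φ1 φ2 z g hz) (ha ψ)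

theorem transpose_map_minorDoubleMatrix_cons_mem_colSpan
    (hz : ∀ α, φ1 α - φ2 α ∈ diagIdeal φ1 φ2 z) (h : Fin p → R)
    (hsat : (minorIdeal (Fin.cons h g) k : Set R) ⊆ sat φ1 φ2 (minorIdeal g k))
    (ψ : S →+* PowerSeries ℂ) (c) :
    ((minorDoubleMatrix φ1 φ2 z (Fin.cons h g) k).map ψ)ᵀ c ∈
      colSpan ((minorDoubleMatrix φ1 φ2 z g k).map ψ) := by
  have hdouble (I : Fin k → Fin p) (J : Fin k → Fin (r + 1)) :=
    vecMap_idDouble_mem_colSpan_map φ1 φ2 z g hz (hsat (Ideal.subset_span ⟨I, J, rfl⟩)) ψ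
  change vecMap ψ ((minorDoubleMatrix φ1 φ2 z (Fin.cons h g) k)ᵀ c) ∈ _
  rcases c with ⟨I, J⟩ | ⟨i, I, J⟩
  · rw [minorDoubleMatrix_transpose_inl]
    exact hdouble I J
  · have hw (c) := smul_single_mem_colSpan φ1 φ2 z g (Ideal.subset_span ⟨i, rfl⟩)
      (minorDoubleMatrix_one_mem_map φ1 φ2 z g (k := k) c)
    rw [minorDoubleMatrix_transpose_inr, map_smulₛₗ]
    convert smul_single_mem_colSpan_map ψ hw (hdouble I J) using 2
    ext j
    fin_cases j <;> simp [vecMap, idDouble]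

theorem I2_minorDoubleMatrix_cons_subset_clIdeal
    (hz : ∀ α, φ1 α - φ2 α ∈ diagIdeal φ1 φ2 z) (h : Fin p → R)
    (hsat : (minorIdeal (Fin.cons h g) k : Set R) ⊆ sat φ1 φ2 (minorIdeal g k)) :
    (I2 (minorDoubleMatrix φ1 φ2 z (Fin.cons h g) k) : Set S) ⊆
      clIdeal (I2 (minorDoubleMatrix φ1 φ2 z g k)) :=
  coe_subset_clIdeal_iff.mpr fun ψ => by
    rw [map_I2, map_I2]
    exact I2_le_of_forall_mem_colSpan
      (transpose_map_minorDoubleMatrix_cons_mem_colSpan φ1 φ2 z g hz h hsat ψ)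

end MinorDoubleMatrix

end Lip

/-- `hcrit` is Gaffney's criterion for `M_D`, which has generic rank `2k` on each component
of `X × X` because `M` has generic rank `k` on each component of `X`. -/
theorem satThree_mem_satOne {R S : Type*} [CommRing R] [CommRing S] {p r n k : ℕ}
    (φ1 φ2 : R →+* S) (z : Fin n → R)
    (hz : ∀ α : R, φ1 α - φ2 α ∈ Ideal.span (Set.range fun i => φ1 (z i) - φ2 (z i)))
    (g : Fin r → (Fin p → R)) (h : Fin p → R) (I : Ideal S)
    (hI1 : ((I * Lip.I2 (Lip.minorDoubleMatrix φ1 φ2 z g k) : Ideal S) : Set S)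
      ⊆ Lip.clIdeal (Lip.I2kM φ1 φ2 z g k))
    (hI2 : ((Lip.I2kHM φ1 φ2 z g h k : Ideal S) : Set S)
      ⊆ Lip.clIdeal
          (I * Lip.I2 (Lip.minorDoubleMatrix φ1 φ2 z (Fin.cons h g) k)))
    (hcrit : ((Lip.I2kHM φ1 φ2 z g h k : Ideal S) : Set S)
        ⊆ Lip.clIdeal (Lip.I2kM φ1 φ2 z g k) →
      Lip.double φ1 φ2 h ∈
        Lip.curveCl (Submodule.span S
          (Lip.double φ1 φ2 '' (Submodule.span R (Set.range g) : Set (Fin p → R)))))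
    (hsat : ((Ideal.span {d : R | ∃ (I' : Fin k → Fin p) (J' : Fin k → Fin (r + 1)),
        d = Matrix.det (Matrix.of fun a b : Fin k =>
          (Fin.cons h g : Fin (r + 1) → Fin p → R) (J' b) (I' a))} : Ideal R) : Set R)
      ⊆ Lip.sat φ1 φ2
          (Ideal.span {d : R | ∃ (I' : Fin k → Fin p) (J' : Fin k → Fin r),
            d = Matrix.det (Matrix.of fun a b : Fin k => g (J' b) (I' a))})) :
    Lip.double φ1 φ2 h ∈
      Lip.curveCl (Submodule.span S
        (Lip.double φ1 φ2 '' (Submodule.span R (Set.range g) : Set (Fin p → R)))) := by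
  have hI2_cons : (Lip.I2 (Lip.minorDoubleMatrix φ1 φ2 z (Fin.cons h g) k) : Set S) ⊆
      Lip.clIdeal (Lip.I2 (Lip.minorDoubleMatrix φ1 φ2 z g k)) :=
    Lip.I2_minorDoubleMatrix_cons_subset_clIdeal φ1 φ2 z g hz h hsat
  refine hcrit (hI2.trans ?_)
  exact (Lip.clIdeal_subset_clIdeal (Lip.mul_subset_clIdeal_mul I hI2_cons)).trans
    (Lip.clIdeal_subset_clIdeal hI1)
end
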